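/- Let X be a polyadic space. Then dd(X) = [d(X), w(X)]; that is, for every cardinal λ, X has a dense subspace of density λ if and only if d(X) ≤ λ ≤ w(X). -/

import Mathlib

open Cardinal Set Function

universe u

noncomputable section

/-- The density of a topological space: least cardinality of a dense subset. -/
def tdensity (X : Type u) [TopologicalSpace X] : Cardinal.{u} :=
  sInf {c : Cardinal.{u} | ∃ s : Set X, Dense s ∧ #s = c}

/-- The weight of a topological space: least cardinality of a base. -/
def tweight (X : Type u) [TopologicalSpace X] : Cardinal.{u} :=
  sInf {c : Cardinal.{u} | ∃ B : Set (Set X), TopologicalSpace.IsTopologicalBasis B ∧ #B = c}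

/-- The π-weight: least cardinality of a π-base. -/
def piWeight (X : Type u) [TopologicalSpace X] : Cardinal.{u} :=
  sInf {c : Cardinal.{u} | ∃ B : Set (Set X),
    (∀ U ∈ B, IsOpen U ∧ U.Nonempty) ∧
    (∀ V : Set X, IsOpen V → V.Nonempty → ∃ U ∈ B, U ⊆ V) ∧ #B = c}

/-- ĉ(X): the least cardinal κ such that X has no pairwise disjoint family of κ
nonempty open sets. -/
def hatCell (X : Type u) [TopologicalSpace X] : Cardinal.{u} :=
  sInf {c : Cardinal.{u} | ¬ ∃ 𝒰 : Set (Set X),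
    (∀ U ∈ 𝒰, IsOpen U ∧ U.Nonempty) ∧ 𝒰.PairwiseDisjoint id ∧ #𝒰 = c}

/-- `H` is a closed G_λ set: closed and the intersection of at most λ open sets. -/
def IsClosedGLambda (lam : Cardinal.{u}) {X : Type u} [TopologicalSpace X] (H : Set X) : Prop :=
  IsClosed H ∧ ∃ 𝒰 : Set (Set X), (∀ U ∈ 𝒰, IsOpen U) ∧ #𝒰 ≤ lam ∧ H = ⋂₀ 𝒰

/-- X ∈ Γ(λ): every closed G_λ set has density ≤ λ. -/
def InGamma (lam : Cardinal.{u}) (X : Type u) [TopologicalSpace X] : Prop :=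
  ∀ H : Set X, IsClosedGLambda lam H → tdensity ↥H ≤ lam

/-- `S` witnesses `X ∈ Δ(λ)`. -/
def DeltaWitness (lam : Cardinal.{u}) (X : Type u) [TopologicalSpace X] (S : Set X) : Prop :=
  Dense S ∧
  (∀ T : Set X, T ⊆ S → #T < lam → tweight ↥(closure T) < lam) ∧
  (∀ (Y : Type u) (_ : TopologicalSpace Y), T2Space Y → ∀ f : X → Y,
     Continuous f → Surjective f → tweight Y = lam → #(f '' S) = lam)

/-- X ∈ Δ(λ). -/
def InDelta (lam : Cardinal.{u}) (X : Type u) [TopologicalSpace X] : Prop :=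
  lam ≤ tweight X ∧ ∃ S : Set X, DeltaWitness lam X S

/-- A canonical discrete space of cardinality `c`. -/
instance (c : Cardinal.{u}) : TopologicalSpace c.out := ⊥

instance (c : Cardinal.{u}) : DiscreteTopology c.out := ⟨rfl⟩

/-- A(μ): one-point compactification of a discrete space of cardinality μ. -/
def ACompact (μ : Cardinal.{u}) : Type u := OnePoint μ.out

instance (μ : Cardinal.{u}) : TopologicalSpace (ACompact μ) :=
  inferInstanceAs (TopologicalSpace (OnePoint μ.out))

/-- A(μ)^κ. -/
def APow (μ κ : Cardinal.{u}) : Type u := κ.out → ACompact μ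

instance (μ κ : Cardinal.{u}) : TopologicalSpace (APow μ κ) :=
  inferInstanceAs (TopologicalSpace (κ.out → ACompact μ))

/-- The set of finite-support points of A(μ)^κ. -/
def finSupport (μ κ : Cardinal.{u}) : Set (APow μ κ) :=
  {x | {ξ | x ξ ≠ (OnePoint.infty : OnePoint μ.out)}.Finite}

/-- X is polyadic: a continuous image of some A(μ)^κ. -/
def IsPolyadic (X : Type u) [TopologicalSpace X] : Prop :=
  ∃ μ κ : Cardinal.{u}, ℵ₀ ≤ μ ∧ ∃ f : APow μ κ → X, Continuous f ∧ Surjective f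

/-!
A dense `D ⊆ X` has `d(X) ≤ d(D) ≤ w(D) ≤ w(X)`, and a dense set of size `d(X)` has density
`d(X)`. For `d(X) < λ ≤ w(X)`, lift a dense set of size `ν = d(X)` to `A(μ)^κ`: in each coordinate
the lifts together with `∞` span a closed subspace of `A(μ)` of size and weight `≤ ν`, and `X` is a
continuous image of the product of these. Freezing, by Zorn, a maximal set of coordinates at a
base point without losing surjectivity leaves only essential coordinates: freezing one more gives a
proper closed image. There are at least `λ` of them, since `X` is then an image of their product,
which has weight at most `ν` times their number; and at most `2^ν`, since an essential coordinate
is determined up to finitely many choices by a subset of the dense set. Hewitt–Marczewski–Pondiczery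
then gives a set of size `ν` that is dense in every finite set of coordinates. Spreading it over `λ`
of the essential coordinates, with all but finitely many of them frozen in each point, yields a
dense set of size `λ` whose subsets of size `< λ` leave some essential coordinate frozen and so are
not dense.
-/

open TopologicalSpace

section CardinalFunctions

variable {X : Type u} [TopologicalSpace X]

lemma tdensity_le_mk_of_dense {s : Set X} (hs : Dense s) : tdensity X ≤ #s :=
  csInf_le' ⟨s, hs, rfl⟩

lemma exists_dense_mk_eq_tdensity (X : Type u) [TopologicalSpace X] :
    ∃ s : Set X, Dense s ∧ #s = tdensity X :=
  csInf_mem (s := {c | ∃ s : Set X, Dense s ∧ #s = c}) ⟨_, univ, dense_univ, rfl⟩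

lemma tweight_le_mk_of_isTopologicalBasis {B : Set (Set X)} (hB : IsTopologicalBasis B) :
    tweight X ≤ #B :=
  csInf_le' ⟨B, hB, rfl⟩

lemma exists_isTopologicalBasis_mk_eq_tweight (X : Type u) [TopologicalSpace X] :
    ∃ B : Set (Set X), IsTopologicalBasis B ∧ #B = tweight X :=
  csInf_mem (s := {c | ∃ B : Set (Set X), IsTopologicalBasis B ∧ #B = c})
    ⟨_, _, isTopologicalBasis_opens, rfl⟩

lemma tdensity_le_mk (X : Type u) [TopologicalSpace X] : tdensity X ≤ #X := by
  simpa using tdensity_le_mk_of_dense (dense_univ (X := X))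

lemma tdensity_le_tweight (X : Type u) [TopologicalSpace X] : tdensity X ≤ tweight X := by
  obtain ⟨B, hB, hBw⟩ := exists_isTopologicalBasis_mk_eq_tweight X
  let pt : {U : Set X // U ∈ B ∧ U.Nonempty} → X := fun U => U.2.2.some
  have hdense : Dense (range pt) :=
    hB.dense_iff.2 fun U hU hne => ⟨pt ⟨U, hU, hne⟩, hne.some_mem, mem_range_self _⟩
  calc tdensity X ≤ #(range pt) := tdensity_le_mk_of_dense hdense
    _ ≤ #{U : Set X // U ∈ B ∧ U.Nonempty} := mk_range_le
    _ ≤ #B := mk_subtype_mono fun _ h => h.1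
    _ = tweight X := hBw

lemma tweight_subtype_le (s : Set X) : tweight s ≤ tweight X := by
  obtain ⟨B, hB, hBw⟩ := exists_isTopologicalBasis_mk_eq_tweight X
  calc tweight s ≤ #(preimage Subtype.val '' B) :=
        tweight_le_mk_of_isTopologicalBasis (hB.isInducing .subtypeVal)
    _ ≤ #B := mk_image_le
    _ = tweight X := hBw

lemma Dense.image_val_of_dense {D : Set X} (hD : Dense D) {s : Set D} (hs : Dense s) :
    Dense (Subtype.val '' s) :=
  hD.denseRange_val.dense_image continuous_subtype_val hs

lemma tdensity_le_tdensity_of_dense {D : Set X} (hD : Dense D) : tdensity X ≤ tdensity D := by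
  obtain ⟨s, hs, hsd⟩ := exists_dense_mk_eq_tdensity D
  calc tdensity X ≤ #(Subtype.val '' s) := tdensity_le_mk_of_dense (hD.image_val_of_dense hs)
    _ = tdensity D := (mk_image_eq Subtype.val_injective).trans hsd

lemma le_tdensity_of_forall_not_dense {D : Set X} (hD : Dense D) {c : Cardinal.{u}}
    (h : ∀ T ⊆ D, #T < c → ¬ Dense T) : c ≤ tdensity D := by
  obtain ⟨s, hs, hsd⟩ := exists_dense_mk_eq_tdensity D
  by_contra! hlt
  refine h _ (Subtype.coe_image_subset D s) ?_ (hD.image_val_of_dense hs)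
  rwa [mk_image_eq Subtype.val_injective, hsd]

lemma exists_dense_tdensity_eq_tdensity (X : Type u) [TopologicalSpace X] :
    ∃ D : Set X, Dense D ∧ tdensity D = tdensity X := by
  obtain ⟨D, hD, hDd⟩ := exists_dense_mk_eq_tdensity X
  exact ⟨D, hD, ((tdensity_le_mk D).trans hDd.le).antisymm (tdensity_le_tdensity_of_dense hD)⟩

lemma aleph0_le_tdensity_of_lt_tweight [T1Space X] (h : tdensity X < tweight X) :
    ℵ₀ ≤ tdensity X := by
  obtain ⟨s, hs, hsd⟩ := exists_dense_mk_eq_tdensity X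
  rw [← hsd, aleph0_le_mk_iff, infinite_coe_iff]
  intro hfin
  have hs_univ : s = Set.univ := hfin.isClosed.closure_eq.symm.trans hs.closure_eq
  have : Finite X := finite_univ_iff.1 (hs_univ ▸ hfin)
  refine h.not_ge ?_
  calc tweight X ≤ #{t : Set X | ∃ x, t = {x}} :=
        tweight_le_mk_of_isTopologicalBasis (isTopologicalBasis_singletons X)
    _ ≤ #X := mk_le_of_surjective (f := fun x => ⟨{x}, x, rfl⟩) fun ⟨_, x, hx⟩ => ⟨x, by simp [hx]⟩
    _ = tdensity X := by rw [← hsd, hs_univ, mk_univ]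

end CardinalFunctions

lemma mk_finset_le_max (α : Type u) : #(Finset α) ≤ max ℵ₀ #α := by
  classical
  exact (mk_le_of_surjective List.toFinset_surjective).trans (mk_list_le_max α)

lemma mk_setOf_finite_subset_le {α : Type u} (s : Set α) :
    #{f : Set α | f.Finite ∧ f ⊆ s} ≤ max ℵ₀ #s := by
  classical
  refine (mk_le_of_surjective (f := fun G : Finset s =>
    ⟨Subtype.val '' (G : Set s), G.finite_toSet.image _, Subtype.coe_image_subset s _⟩) ?_).trans
    (mk_finset_le_max s)
  rintro ⟨f, hf, hfs⟩
  refine ⟨(hf.preimage Subtype.val_injective.injOn).toFinset, ?_⟩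
  simpa [Subtype.image_preimage_coe] using hfs

lemma tweight_le_of_eq_generateFrom {K : Type u} [t : TopologicalSpace K] {𝒮 : Set (Set K)}
    (h : t = generateFrom 𝒮) : tweight K ≤ max ℵ₀ #𝒮 :=
  (tweight_le_mk_of_isTopologicalBasis (isTopologicalBasis_of_subbasis h)).trans
    (mk_image_le.trans (mk_setOf_finite_subset_le 𝒮))

lemma tweight_pi_le {ι : Type u} {Y : ι → Type u} [∀ i, TopologicalSpace (Y i)] :
    tweight (∀ i, Y i) ≤ max ℵ₀ (sum fun i => tweight (Y i)) := by
  choose ℬ hℬ hℬw using fun i => exists_isTopologicalBasis_mk_eq_tweight (Y i)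
  have hgen : (Pi.topologicalSpace : TopologicalSpace (∀ i, Y i)) =
      generateFrom (⋃ i, preimage (Function.eval i) '' ℬ i) := by
    rw [generateFrom_iUnion]
    simp_rw [← induced_generateFrom_eq, ← (hℬ _).eq_generateFrom]
    rfl
  refine (tweight_le_of_eq_generateFrom hgen).trans (max_le_max le_rfl ?_)
  calc #(⋃ i, preimage (Function.eval i) '' ℬ i)
      ≤ sum fun i => #(preimage (Function.eval i) '' ℬ i) := mk_iUnion_le_sum_mk
    _ ≤ sum fun i => tweight (Y i) := sum_le_sum _ _ fun i => mk_image_le.trans (hℬw i).le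

lemma tweight_le_of_continuous_of_surjective {K X : Type u} [TopologicalSpace K] [CompactSpace K]
    [TopologicalSpace X] [T2Space X] {f : K → X} (hf : Continuous f) (hs : Surjective f) :
    tweight X ≤ max ℵ₀ (tweight K) := by
  obtain ⟨ℬ, hℬ, hℬw⟩ := exists_isTopologicalBasis_mk_eq_tweight K
  -- `cand G` is the set of points whose whole (compact) fibre lies in `⋃₀ G`
  let cand : Set (Set K) → Set X := fun G => (f '' (⋃₀ G)ᶜ)ᶜ
  have hbasis : IsTopologicalBasis (cand '' {G | G.Finite ∧ G ⊆ ℬ}) := by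
    refine isTopologicalBasis_of_isOpen_of_nhds ?_ fun a O ha hO => ?_
    · rintro _ ⟨G, ⟨-, hG⟩, rfl⟩
      exact ((isOpen_sUnion fun U hU => hℬ.isOpen (hG hU)).isClosed_compl.isCompact.image
        hf).isClosed.isOpen_compl
    have hfib : f ⁻¹' {a} ⊆ ⋃ U ∈ {U | U ∈ ℬ ∧ U ⊆ f ⁻¹' O}, U := fun x hx => by
      obtain ⟨U, hU, hxU, hUO⟩ :=
        hℬ.exists_subset_of_mem_open (show x ∈ f ⁻¹' O by simp_all) (hO.preimage hf)
      exact mem_biUnion ⟨hU, hUO⟩ hxU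
    obtain ⟨G, hGsub, hGfin, hGcov⟩ := (isClosed_singleton.preimage hf).isCompact
      |>.elim_finite_subcover_image (fun U hU => hℬ.isOpen hU.1) hfib
    refine ⟨cand G, ⟨G, ⟨hGfin, fun U hU => (hGsub hU).1⟩, rfl⟩, ?_, ?_⟩
    · rintro ⟨x, hx, rfl⟩
      exact hx (by simpa [sUnion_eq_biUnion] using hGcov (mem_preimage.2 rfl))
    · intro y hy
      obtain ⟨x, rfl⟩ := hs y
      obtain ⟨U, hU, hxU⟩ : x ∈ ⋃₀ G := by_contra fun hx => hy ⟨x, hx, rfl⟩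
      exact (hGsub hU).2 hxU
  calc tweight X ≤ #(cand '' {G | G.Finite ∧ G ⊆ ℬ}) := tweight_le_mk_of_isTopologicalBasis hbasis
    _ ≤ max ℵ₀ #ℬ := mk_image_le.trans (mk_setOf_finite_subset_le ℬ)
    _ = max ℵ₀ (tweight K) := by rw [hℬw]

lemma tweight_le_of_isOpen_singleton {K : Type u} [TopologicalSpace K] [CompactSpace K]
    [T1Space K] (a : K) (h : ∀ b ≠ a, IsOpen ({b} : Set K)) : tweight K ≤ max ℵ₀ #K := by
  classical
  let 𝒰 : Set (Set K) := (fun b => {b}) '' {a}ᶜ ∪ range fun F : Finset K => (F : Set K)ᶜ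
  have hbasis : IsTopologicalBasis 𝒰 := by
    refine isTopologicalBasis_of_isOpen_of_nhds ?_ fun x U hx hU => ?_
    · rintro _ (⟨b, hb, rfl⟩ | ⟨F, rfl⟩)
      exacts [h b hb, F.finite_toSet.isClosed.isOpen_compl]
    by_cases hxa : x = a
    · -- a compact set avoiding `a` is covered by open singletons, hence finite
      have hfin : Uᶜ.Finite := by
        obtain ⟨G, hGU, hGfin, hcov⟩ := hU.isClosed_compl.isCompact.elim_finite_subcover_image
          (b := Uᶜ) (c := fun b => {b}) (fun b hb => h b (by rintro rfl; exact hb (hxa ▸ hx)))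
          (fun b hb => mem_biUnion hb rfl)
        exact hGfin.subset (by simpa using hcov)
      exact ⟨(hfin.toFinset : Set K)ᶜ, Or.inr ⟨_, rfl⟩, by simpa using hx, by simp⟩
    · exact ⟨{x}, Or.inl ⟨x, hxa, rfl⟩, rfl, singleton_subset_iff.2 hx⟩
  calc tweight K ≤ #𝒰 := tweight_le_mk_of_isTopologicalBasis hbasis
    _ ≤ #K + #(Finset K) :=
        (mk_union_le _ _).trans (add_le_add (mk_image_le.trans (mk_set_le _)) mk_range_le)
    _ ≤ max ℵ₀ #K := add_le_of_le (le_max_left _ _) (le_max_right _ _) (mk_finset_le_max K)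

lemma Finset.exists_separating_finset {α β : Type*} (c : α → Set β) (J : Finset α) :
    ∃ F : Finset β, ∀ i ∈ J, ∀ j ∈ J, (∀ t ∈ F, t ∈ c i ↔ t ∈ c j) → c i = c j := by
  classical
  have hpair : ∀ p : α × α, ∃ F : Finset β, (∀ t ∈ F, t ∈ c p.1 ↔ t ∈ c p.2) → c p.1 = c p.2 :=
    fun p => by
      by_cases h : c p.1 = c p.2
      · exact ⟨∅, fun _ => h⟩
      · obtain ⟨t, ht⟩ := not_forall.1 (mt Set.ext h)
        exact ⟨{t}, fun hF => (ht (hF t (Finset.mem_singleton_self t))).elim⟩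
  choose G hG using hpair
  exact ⟨(J ×ˢ J).biUnion G, fun i hi j hj hF => hG (i, j) fun t ht =>
    hF t (Finset.mem_biUnion.2 ⟨(i, j), Finset.mem_product.2 ⟨hi, hj⟩, ht⟩)⟩

/-- A Hewitt–Marczewski–Pondiczery type lemma: code the coordinates by distinct subsets
`c i ⊆ T`, `#T = ν`; a point is then given by a finite `F ⊆ T` and a value for each trace
`c i ∩ F`, and finitely many coordinates have distinct traces on a suitable `F`. -/
lemma exists_mk_le_forall_finset_exists_eqOn {ι : Type u} {Y : ι → Type u} [∀ i, Nonempty (Y i)]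
    {ν : Cardinal.{u}} (hν : ℵ₀ ≤ ν) (hι : #ι ≤ 2 ^ ν) (hY : ∀ i, #(Y i) ≤ ν) :
    ∃ P : Set (∀ i, Y i), #P ≤ ν ∧
      ∀ (J : Finset ι) (x : ∀ i, Y i), ∃ p ∈ P, ∀ i ∈ J, p i = x i := by
  classical
  let T := ν.out
  have hT : #T = ν := mk_out ν
  have : Nonempty T := by rw [← mk_ne_zero_iff, hT]; exact (aleph0_pos.trans_le hν).ne'
  obtain ⟨c⟩ : Nonempty (ι ↪ Set T) := by rwa [← le_def, mk_set, hT]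
  have he : ∀ i, Nonempty (Y i ↪ T) := fun i => by rw [← le_def, hT]; exact hY i
  let e : ∀ i, Y i ↪ T := fun i => Classical.choice (he i)
  let pt : (Σ F : Finset T, Set F → T) → ∀ i, Y i :=
    fun φ i => Function.invFun (e i) (φ.2 {t | (t : T) ∈ c i})
  refine ⟨range pt, mk_range_le.trans ?_, fun J x => ?_⟩
  · rw [mk_sigma]
    calc sum (fun F : Finset T => #(Set F → T)) ≤ sum fun _ : Finset T => ν :=
          sum_le_sum _ _ fun F => by rw [← power_def, mk_fintype (Set F), hT]; exact power_nat_le hν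
      _ = #(Finset T) * ν := sum_const' _ _
      _ ≤ ν * ν := mul_le_mul' ((mk_finset_le_max T).trans (max_le hν hT.le)) le_rfl
      _ = ν := mul_eq_self hν
  obtain ⟨F, hF⟩ := J.exists_separating_finset c
  let key : J → Set F := fun i => {t | (t : T) ∈ c i}
  have hkey : Injective key := fun i j hij => Subtype.ext <| c.injective <|
    hF i i.2 j j.2 fun t ht => by simpa [key] using congrArg (⟨t, ht⟩ ∈ ·) hij
  refine ⟨pt ⟨F, Function.extend key (fun i => e i (x i)) fun _ => Classical.arbitrary T⟩,
    mem_range_self _, fun i hi => ?_⟩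
  have := hkey.extend_apply (fun i => e i (x i)) (fun _ => Classical.arbitrary T) ⟨i, hi⟩
  simp only [pt, key] at this ⊢
  rw [this]
  exact Function.leftInverse_invFun (e i).injective (x i)

lemma dense_of_forall_finset_exists_eqOn {ι : Type*} {Y : ι → Type*} [∀ i, TopologicalSpace (Y i)]
    {s : Set (∀ i, Y i)} (h : ∀ (I : Finset ι) (x : ∀ i, Y i), ∃ y ∈ s, ∀ i ∈ I, y i = x i) :
    Dense s := by
  refine dense_iff_inter_open.2 fun U hU ⟨x, hx⟩ => ?_
  obtain ⟨I, u, hu, hIU⟩ := isOpen_pi_iff.1 hU x hx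
  obtain ⟨y, hy, hyx⟩ := h I x
  exact ⟨y, hIU fun i hi => hyx i hi ▸ (hu i hi).2, hy⟩

lemma exists_forall_notMem_of_mk_lt {κ B : Type u} (F : κ → Finset B) (hB : ℵ₀ < #B)
    (hκ : #κ < #B) : ∃ β, ∀ k, β ∉ F k := by
  by_contra! hcover
  have : #B ≤ #κ * ℵ₀ := calc
    #B = #(⋃ k, (F k : Set B)) := by
      rw [eq_univ_of_forall fun β => mem_iUnion.2 (hcover β), mk_univ]
    _ ≤ #κ * ⨆ k, #(F k : Set B) := mk_iUnion_le _
    _ ≤ #κ * ℵ₀ := mul_le_mul' le_rfl (ciSup_le' fun k => (lt_aleph0_of_finite _).le)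
  exact (mul_lt_of_lt hB.le hκ hB).not_ge this

section ProductImages

variable {ι : Type u} {Y : ι → Type u} [∀ i, TopologicalSpace (Y i)] [∀ i, CompactSpace (Y i)]
  [∀ i, T1Space (Y i)] {X : Type u} [TopologicalSpace X]

lemma isClosed_image_setOf_apply_eq [T2Space X] {h : (∀ i, Y i) → X} (hc : Continuous h)
    (z : ∀ i, Y i) (i : ι) : IsClosed (h '' {x | x i = z i}) :=
  ((isClosed_singleton.preimage (continuous_apply i)).isCompact.image hc).isClosed

lemma exists_maximal_image_pi_eq_univ [T1Space X] {g : (∀ i, Y i) → X} (hc : Continuous g)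
    (hs : Surjective g) (z : ∀ i, Y i) :
    ∃ S : Set ι, g '' S.pi (fun i => {z i}) = Set.univ ∧
      ∀ i ∉ S, g '' (insert i S).pi (fun i => {z i}) ≠ Set.univ := by
  let 𝒮 : Set (Set ι) := {S | g '' S.pi (fun i => {z i}) = Set.univ}
  have hchain : ∀ c ⊆ 𝒮, IsChain (· ⊆ ·) c → c.Nonempty → ∃ ub ∈ 𝒮, ∀ s ∈ c, s ⊆ ub := by
    intro c hc𝒮 hchain hcne
    refine ⟨⋃₀ c, eq_univ_of_forall fun y => ?_, fun s hs => subset_sUnion_of_mem hs⟩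
    have : Nonempty c := hcne.to_subtype
    -- the fibre of `y` meets every `S.pi {z}`, `S ∈ c`, so by compactness their intersection
    let t : c → Set (∀ i, Y i) := fun S => S.1.pi (fun i => {z i}) ∩ g ⁻¹' {y}
    have hclosed : ∀ S, IsClosed (t S) := fun S =>
      (isClosed_set_pi fun i _ => isClosed_singleton).inter (isClosed_singleton.preimage hc)
    have hdir : Directed (· ⊇ ·) t := fun S T =>
      (hchain.total S.2 T.2).elim
        (fun h => ⟨T, inter_subset_inter_left _ fun x hx i hi => hx i (h hi), subset_rfl⟩)
        (fun h => ⟨S, subset_rfl, inter_subset_inter_left _ fun x hx i hi => hx i (h hi)⟩)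
    have hne : ∀ S, (t S).Nonempty := fun S => by
      obtain ⟨x, hx, rfl⟩ : y ∈ g '' S.1.pi (fun i => {z i}) := (hc𝒮 S.2).symm ▸ mem_univ y
      exact ⟨x, hx, rfl⟩
    obtain ⟨x, hx⟩ := IsCompact.nonempty_iInter_of_directed_nonempty_isCompact_isClosed t hdir hne
      (fun S => (hclosed S).isCompact) hclosed
    refine ⟨x, fun i ⟨S, hS, hiS⟩ => (mem_iInter.1 hx ⟨S, hS⟩).1 i hiS, ?_⟩
    exact (mem_iInter.1 hx ⟨hcne.some, hcne.some_mem⟩).2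
  obtain ⟨S, -, hS⟩ := zorn_subset_nonempty 𝒮 hchain ∅ (by simp [𝒮, hs.range_eq])
  exact ⟨S, hS.1, fun i hi hcontra => hi (hS.2 hcontra (subset_insert i S) (mem_insert i S))⟩

lemma exists_essential_coordinates [T1Space X] [∀ i, Nonempty (Y i)] {g : (∀ i, Y i) → X}
    (hc : Continuous g) (hs : Surjective g) :
    ∃ (E : Set ι) (h : (∀ i : E, Y i) → X) (z : ∀ i : E, Y i),
      Continuous h ∧ Surjective h ∧ ∀ i, h '' {x | x i = z i} ≠ Set.univ := by
  classical
  obtain ⟨z⟩ : Nonempty (∀ i, Y i) := inferInstance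
  obtain ⟨S, hS, hmax⟩ := exists_maximal_image_pi_eq_univ hc hs z
  let ext : (∀ i : ↥Sᶜ, Y i) → ∀ i, Y i := fun q i => if hi : i ∈ S then z i else q ⟨i, hi⟩
  have hext : Continuous ext := continuous_pi fun i => by
    by_cases hi : i ∈ S
    · simp only [ext, dif_pos hi]; exact continuous_const
    · simp only [ext, dif_neg hi]; exact continuous_apply _
  refine ⟨Sᶜ, g ∘ ext, fun i => z i, hc.comp hext, fun y => ?_, fun i hi => hmax i i.2 ?_⟩
  · obtain ⟨x, hx, rfl⟩ : y ∈ g '' _ := hS ▸ mem_univ y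
    refine ⟨fun i => x i, congrArg g (funext fun i => ?_)⟩
    by_cases h : i ∈ S
    · simpa [ext, h] using (hx i h).symm
    · simp [ext, h]
  refine eq_univ_of_forall fun y => ?_
  obtain ⟨q, hq, rfl⟩ := hi ▸ mem_univ y
  refine ⟨ext q, ?_, rfl⟩
  rintro j (rfl | hj)
  · exact (dif_neg i.2).trans hq
  · simp [ext, hj]

/-- Pick a nonempty open `V i` whose closure misses `h '' {x | x i = z i}`. Coordinates `j` on
which `V j` has the same trace on a dense set `R` as `V i` all avoid one point of `h ⁻¹' V i`
that differs from `z` in finitely many coordinates, so they are finitely many. -/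
lemma mk_le_two_power_tdensity_mul_aleph0 [CompactSpace X] [T2Space X] {h : (∀ i, Y i) → X}
    (hc : Continuous h) (hs : Surjective h) (z : ∀ i, Y i)
    (hess : ∀ i, h '' {x | x i = z i} ≠ Set.univ) : #ι ≤ 2 ^ tdensity X * ℵ₀ := by
  classical
  obtain ⟨R, hR, hRd⟩ := exists_dense_mk_eq_tdensity X
  let F : ι → Set X := fun i => h '' {x | x i = z i}
  have hV : ∀ i, ∃ V : Set X, (V.Nonempty ∧ IsOpen V) ∧ closure V ⊆ (F i)ᶜ := fun i => by
    obtain ⟨p, hp⟩ := (ne_univ_iff_exists_notMem _).1 (hess i)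
    obtain ⟨V, ⟨hpV, hV⟩, hVF⟩ := (hasBasis_opens_closure p).mem_iff.1
      ((isClosed_image_setOf_apply_eq hc z i).isOpen_compl.mem_nhds hp)
    exact ⟨V, ⟨⟨p, hpV⟩, hV⟩, hVF⟩
  choose V hV hVF using hV
  let trace : ι → Set R := fun i => Subtype.val ⁻¹' V i
  have hfib : ∀ i, ∃ I : Finset ι, trace ⁻¹' {trace i} ⊆ I := fun i => by
    obtain ⟨x, hx⟩ := hs (hV i).1.some
    obtain ⟨I, hI⟩ := exists_finset_piecewise_mem_of_mem_nhds
      ((hV i).2.preimage hc |>.mem_nhds (show h x ∈ V i from hx ▸ (hV i).1.some_mem)) z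
    refine ⟨I, fun j hj => by_contra fun hjI => ?_⟩
    have hjF : h (I.piecewise x z) ∈ F j := ⟨_, I.piecewise_eq_of_notMem _ _ hjI, rfl⟩
    have hclosure : V i ⊆ closure (V j) := calc
      V i ⊆ closure (V i ∩ R) := hR.open_subset_closure_inter (hV i).2
      _ = closure (Subtype.val '' trace j) := by
        rw [show trace j = trace i from hj, Subtype.image_preimage_coe, inter_comm]
      _ ⊆ closure (V j) := closure_mono (image_preimage_subset _ _)
    exact hVF j (hclosure hI) hjF
  calc #ι ≤ #(Set R) * ℵ₀ := mk_le_mk_mul_of_mk_preimage_le trace fun A => by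
        by_cases hA : A ∈ range trace
        · obtain ⟨i, rfl⟩ := hA
          obtain ⟨I, hI⟩ := hfib i
          exact (mk_le_mk_of_subset hI).trans (lt_aleph0_of_finite _).le
        · simp [preimage_singleton_eq_empty.2 hA]
    _ = 2 ^ tdensity X * ℵ₀ := by rw [mk_set, hRd]

theorem exists_dense_tdensity_eq_of_essential [∀ i, Nonempty (Y i)] [T2Space X]
    {h : (∀ i, Y i) → X} (hc : Continuous h) (hs : Surjective h) (z : ∀ i, Y i)
    (hess : ∀ i, h '' {x | x i = z i} ≠ Set.univ) {ν lam : Cardinal.{u}} (hν : ℵ₀ ≤ ν)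
    (hνlam : ν < lam) (hlam : lam ≤ #ι) (hι : #ι ≤ 2 ^ ν) (hY : ∀ i, #(Y i) ≤ ν) :
    ∃ D : Set X, Dense D ∧ tdensity D = lam := by
  classical
  have hlam₀ : ℵ₀ < lam := hν.trans_lt hνlam
  obtain ⟨P, hP, hPeq⟩ := exists_mk_le_forall_finset_exists_eqOn hν hι hY
  let B := lam.out
  have hB : #B = lam := mk_out lam
  obtain ⟨j⟩ : Nonempty (B ↪ ι) := by rwa [← le_def, hB]
  let pt : Finset B × P → ∀ i, Y i := fun q => (j '' (q.1 : Set B)ᶜ).piecewise z q.2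
  have hpin : ∀ q β, β ∉ q.1 → pt q (j β) = z (j β) := fun q β hβ =>
    piecewise_eq_of_mem _ _ _ ⟨β, hβ, rfl⟩
  have hdense : Dense (range pt) := dense_of_forall_finset_exists_eqOn fun I x => by
    obtain ⟨p, hp, hpx⟩ := hPeq I x
    refine ⟨pt (I.preimage j j.injective.injOn, ⟨p, hp⟩), mem_range_self _, fun i hi => ?_⟩
    refine (piecewise_eq_of_notMem _ _ _ ?_).trans (hpx i hi)
    rintro ⟨β, hβ, rfl⟩
    exact hβ (by simpa using hi)
  let D := h '' range pt
  have hD : Dense D := hs.denseRange.dense_image hc hdense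
  have hDcard : #D ≤ lam := calc
    #D ≤ #(Finset B × P) := mk_image_le.trans mk_range_le
    _ = #(Finset B) * #P := by simp
    _ ≤ lam * lam := mul_le_mul' ((mk_finset_le_max B).trans (max_le hlam₀.le hB.le))
        (hP.trans hνlam.le)
    _ = lam := mul_eq_self hlam₀.le
  refine ⟨D, hD, ((tdensity_le_mk D).trans hDcard).antisymm
    (le_tdensity_of_forall_not_dense hD fun T hTD hT hTdense => ?_)⟩
  have hlift : ∀ t : T, ∃ q, h (pt q) = t := fun t => by
    obtain ⟨_, ⟨q, rfl⟩, hq⟩ := hTD t.2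
    exact ⟨q, hq⟩
  choose q hq using hlift
  obtain ⟨β, hβ⟩ := exists_forall_notMem_of_mk_lt (fun t => (q t).1) (hB ▸ hlam₀) (hB ▸ hT)
  have hsub : T ⊆ h '' {x | x (j β) = z (j β)} := fun t ht =>
    ⟨pt (q ⟨t, ht⟩), hpin _ _ (hβ _), hq _⟩
  exact hess (j β) (eq_univ_of_univ_subset (hTdense.closure_eq ▸
    closure_minimal hsub (isClosed_image_setOf_apply_eq hc z (j β))))

theorem exists_dense_tdensity_eq_of_pi [∀ i, Nonempty (Y i)] [CompactSpace X] [T2Space X]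
    {g : (∀ i, Y i) → X} (hc : Continuous g) (hs : Surjective g) {ν lam : Cardinal.{u}}
    (hν : ℵ₀ ≤ ν) (hdν : tdensity X ≤ ν) (hwY : ∀ i, tweight (Y i) ≤ ν) (hY : ∀ i, #(Y i) ≤ ν)
    (hνlam : ν < lam) (hlamw : lam ≤ tweight X) : ∃ D : Set X, Dense D ∧ tdensity D = lam := by
  obtain ⟨E, h, z, hc', hs', hess⟩ := exists_essential_coordinates hc hs
  have hlamE : lam ≤ #E := by
    by_contra! hlt
    refine hlamw.not_gt ?_
    calc tweight X ≤ max ℵ₀ (tweight (∀ i : E, Y i)) :=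
          tweight_le_of_continuous_of_surjective hc' hs'
      _ ≤ max ℵ₀ (sum fun i : E => tweight (Y i)) :=
          (max_le_max le_rfl tweight_pi_le).trans_eq (by rw [← max_assoc, max_self])
      _ ≤ max ℵ₀ (#E * ν) :=
          max_le_max le_rfl ((sum_le_sum _ _ fun i : E => hwY i).trans (sum_const' E ν).le)
      _ < lam := max_lt (hν.trans_lt hνlam) (mul_lt_of_lt (hν.trans_lt hνlam).le hlt hνlam)
  have hE : #E ≤ 2 ^ ν := calc
    #E ≤ 2 ^ tdensity X * ℵ₀ := mk_le_two_power_tdensity_mul_aleph0 hc' hs' z hess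
    _ ≤ 2 ^ ν * ℵ₀ := mul_le_mul' (power_le_power_left two_ne_zero hdν) le_rfl
    _ = 2 ^ ν := mul_eq_left (hν.trans (cantor ν).le) (hν.trans (cantor ν).le) aleph0_ne_zero
  exact exists_dense_tdensity_eq_of_essential hc' hs' z hess hν hνlam hlamE hE fun i => hY i

end ProductImages

section OnePoint

variable {Z : Type u} [TopologicalSpace Z] [DiscreteTopology Z] {s : Set (OnePoint Z)}

lemma OnePoint.isClosed_of_infty_mem (hs : OnePoint.infty ∈ s) : IsClosed s :=
  (OnePoint.isClosed_iff_of_mem hs).2 (isClosed_discrete _)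

lemma OnePoint.tweight_subtype_le_of_infty_mem (hs : OnePoint.infty ∈ s) :
    tweight s ≤ max ℵ₀ #s := by
  have := isCompact_iff_compactSpace.1 (isClosed_of_infty_mem hs).isCompact
  refine tweight_le_of_isOpen_singleton ⟨_, hs⟩ fun b hb => ?_
  have hb' : OnePoint.infty ∉ ({b.1} : Set (OnePoint Z)) := fun h => hb (Subtype.ext h.symm)
  have hpre : ({b} : Set s) = Subtype.val ⁻¹' {b.1} := by ext; simp [Subtype.ext_iff]
  exact hpre ▸ ((OnePoint.isOpen_iff_of_notMem hb').2 (isOpen_discrete _)).preimage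
    continuous_subtype_val

end OnePoint

instance (μ : Cardinal.{u}) : CompactSpace (ACompact μ) :=
  inferInstanceAs (CompactSpace (OnePoint μ.out))

instance (μ : Cardinal.{u}) : T2Space (ACompact μ) :=
  inferInstanceAs (T2Space (OnePoint μ.out))

theorem IsPolyadic.exists_dense_tdensity_eq {X : Type u} [TopologicalSpace X] [CompactSpace X]
    [T2Space X] (hX : IsPolyadic X) {lam : Cardinal.{u}} (hd : tdensity X < lam)
    (hw : lam ≤ tweight X) : ∃ D : Set X, Dense D ∧ tdensity D = lam := by
  obtain ⟨μ, κ, -, f, hfc, hfs⟩ := hX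
  have hν := aleph0_le_tdensity_of_lt_tweight (hd.trans_le hw)
  obtain ⟨R, hR, hRd⟩ := exists_dense_mk_eq_tdensity X
  choose y hy using fun r : R => hfs r
  let C : κ.out → Set (OnePoint μ.out) := fun ξ => insert OnePoint.infty (range fun r => y r ξ)
  have hC : ∀ ξ, OnePoint.infty ∈ C ξ := fun ξ => mem_insert _ _
  have : ∀ ξ, CompactSpace (C ξ) := fun ξ =>
    isCompact_iff_compactSpace.1 (OnePoint.isClosed_of_infty_mem (hC ξ)).isCompact
  have : ∀ ξ, Nonempty (C ξ) := fun ξ => ⟨⟨_, hC ξ⟩⟩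
  let g : (∀ ξ, C ξ) → X := fun x => f fun ξ => (x ξ : OnePoint μ.out)
  have hgc : Continuous g :=
    hfc.comp (continuous_pi fun ξ => continuous_subtype_val.comp (continuous_apply ξ))
  have hgs : Surjective g := by
    refine range_eq_univ.1 (eq_univ_of_univ_subset (hR.closure_eq ▸
      closure_minimal ?_ (isCompact_range hgc).isClosed))
    exact fun r hr => ⟨fun ξ => ⟨y ⟨r, hr⟩ ξ, mem_insert_of_mem _ ⟨_, rfl⟩⟩, hy ⟨r, hr⟩⟩
  have hCcard : ∀ ξ, #(C ξ) ≤ tdensity X := fun ξ => mk_insert_le.trans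
    (add_le_of_le hν (mk_range_le.trans hRd.le) (one_lt_aleph0.le.trans hν))
  exact exists_dense_tdensity_eq_of_pi hgc hgs hν le_rfl
    (fun ξ => (OnePoint.tweight_subtype_le_of_infty_mem (hC ξ)).trans (max_le hν (hCcard ξ)))
    hCcard hd hw

/-- Theorem 3.5 (tm:pdd): dd(X) = [d(X), w(X)] for polyadic X. -/
theorem statement13 {X : Type u} [TopologicalSpace X] [CompactSpace X] [T2Space X]
    (hX : IsPolyadic X) (lam : Cardinal.{u}) :
    (∃ D : Set X, Dense D ∧ tdensity ↥D = lam) ↔ tdensity X ≤ lam ∧ lam ≤ tweight X := by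
  refine ⟨?_, fun ⟨hd, hw⟩ => ?_⟩
  · rintro ⟨D, hD, rfl⟩
    exact ⟨tdensity_le_tdensity_of_dense hD, (tdensity_le_tweight D).trans (tweight_subtype_le D)⟩
  · rcases hd.eq_or_lt with rfl | hlt
    · exact exists_dense_tdensity_eq_tdensity X
    · exact hX.exists_dense_tdensity_eq hlt hw
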